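/- arXiv:1209.4256 — 2 statements merged into one kernel-verified Lean document; each statement's English description precedes it below -/
import Mathlib

section
/- Let R = Q/𝔤₄ where 𝔤₄ = (xy², xyz, yz², x⁴ − y³z, xz³ − y⁴, x³y − z⁴, x²z², x³z) ⊆ Q. Then the socle (0 :_R 𝔪) of R is equal to the R-submodule generated by the images of x⁴y and x²z, and its dimension as a k-vector space is 2 (that is, R has type 2). -/
/-!
The ideal `g4` is the annihilator of the Macaulay inverse system generated by
`F = X⁴Y + Y⁴Z + XZ⁴` and `G = X²Z`: a series `f` lies in `g4` exactly when the functionals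
`ℓ_F h = [x⁴y] h + [y⁴z] h + [xz⁴] h` and `ℓ_G h = [x²z] h` vanish on every multiple of `f`.
The monomials `x⁴y` and `x²z` are killed by `𝔪` modulo `g4` and are dual to `ℓ_F, ℓ_G`. So for
`f` in the socle, `f - ℓ_F(f) x⁴y - ℓ_G(f) x²z` is killed by both functionals on all its
multiples (write the multiplier as a constant plus an element of `𝔪`), hence lies in `g4`;
and `ℓ_F, ℓ_G` separate `x⁴y` and `x²z` modulo `g4`.

For the description of `g4` by its inverse system: `g4` contains the monomial ideal
`(xy², xyz, yz², x²z², x³z, x⁵, y⁵, z⁵)`, which misses only 26 monomials. Modulo the relations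
`y³z ≡ x⁴`, `xz³ ≡ y⁴`, `x³y ≡ z⁴`, `y⁴z ≡ xz⁴ ≡ x⁴y`, the coefficients of `f` at these
26 monomials are values of `ℓ_F` or `ℓ_G` on monomial multiples of `f`.
-/

noncomputable section

/-- The variable `x` in `Q = k[[x,y,z]]`. -/
def xx (k : Type*) [Field k] : MvPowerSeries (Fin 3) k := MvPowerSeries.X 0
/-- The variable `y` in `Q = k[[x,y,z]]`. -/
def yy (k : Type*) [Field k] : MvPowerSeries (Fin 3) k := MvPowerSeries.X 1
/-- The variable `z` in `Q = k[[x,y,z]]`. -/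
def zz (k : Type*) [Field k] : MvPowerSeries (Fin 3) k := MvPowerSeries.X 2

/-- The ideal `g4` of the paper. -/
def Ig4 (k : Type*) [Field k] : Ideal (MvPowerSeries (Fin 3) k) :=
  Ideal.span {xx k * yy k ^ 2, xx k * yy k * zz k, yy k * zz k ^ 2, xx k ^ 4 - yy k ^ 3 * zz k, xx k * zz k ^ 3 - yy k ^ 4, xx k ^ 3 * yy k - zz k ^ 4, xx k ^ 2 * zz k ^ 2, xx k ^ 3 * zz k}

namespace MvPowerSeries

variable {σ R : Type*} [CommSemiring R]

theorem mem_span_monomial_of_coeff_ne_zero {S : Finset (σ →₀ ℕ)} {f : MvPowerSeries σ R}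
    (h : ∀ d, coeff d f ≠ 0 → ∃ e ∈ S, e ≤ d) :
    f ∈ Ideal.span ((fun e => monomial e (1 : R)) '' S) := by
  classical
  let sel : (σ →₀ ℕ) → σ →₀ ℕ := fun d => if hd : ∃ e ∈ S, e ≤ d then hd.choose else 0
  have hsel : ∀ d, coeff d f ≠ 0 → sel d ∈ S ∧ sel d ≤ d := fun d hd => by
    simpa only [sel, dif_pos (h d hd)] using (h d hd).choose_spec
  -- `quot e` collects the terms of `f` that `sel` assigns to `e`, divided by `X ^ e`
  let quot : (σ →₀ ℕ) → MvPowerSeries σ R := fun e d =>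
    if sel (d + e) = e then coeff (d + e) f else 0
  have coeff_quot : ∀ e d, coeff d (quot e) = if sel (d + e) = e then coeff (d + e) f else 0 :=
    fun _ _ => rfl
  have hf : f = ∑ e ∈ S, monomial e (1 : R) * quot e := by
    ext d
    simp only [map_sum, coeff_monomial_mul, one_mul]
    by_cases hd : coeff d f = 0
    · rw [hd, eq_comm]
      apply Finset.sum_eq_zero
      intro e _
      split_ifs with hed <;> simp_all [tsub_add_cancel_of_le]
    · obtain ⟨hmem, hle⟩ := hsel d hd
      rw [Finset.sum_eq_single_of_mem _ hmem fun e _ he => ?_]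
      · simp [coeff_quot, hle, tsub_add_cancel_of_le hle]
      · split_ifs with hed
        · rw [coeff_quot, tsub_add_cancel_of_le hed]
          exact if_neg (Ne.symm he)
        · rfl
  rw [hf]
  exact Ideal.sum_mem _ fun e he => Ideal.mul_mem_right _ _ (Ideal.subset_span ⟨e, he, rfl⟩)

theorem sub_C_constantCoeff_mem_span_X {σ R : Type*} [CommRing R] [Finite σ]
    (f : MvPowerSeries σ R) :
    f - C (σ := σ) (constantCoeff f) ∈ Ideal.span (Set.range (X (R := R) (σ := σ))) := by
  classical
  have := Fintype.ofFinite σ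
  have hS : (fun e => monomial e (1 : R)) ''
      ((Finset.univ.image fun i : σ => Finsupp.single i 1 : Finset _) : Set (σ →₀ ℕ)) =
        Set.range X := by
    ext; simp [X]
  rw [← hS]
  refine mem_span_monomial_of_coeff_ne_zero fun d hd => ?_
  obtain ⟨i, hi⟩ : ∃ i, d i ≠ 0 := by
    by_contra! h0
    obtain rfl : d = 0 := Finsupp.ext h0
    simp at hd
  exact ⟨_, Finset.mem_image_of_mem _ (Finset.mem_univ i),
    Finsupp.single_le_iff.mpr (Nat.one_le_iff_ne_zero.mpr hi)⟩

end MvPowerSeries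

namespace Module.Dual

variable {R A : Type*} [CommSemiring R] [CommSemiring A] [Module R A]

def annIdeal (φ : Module.Dual R A) : Ideal A where
  carrier := {a | ∀ g, φ (g * a) = 0}
  add_mem' ha hb g := by simp [mul_add, ha g, hb g]
  zero_mem' g := by simp
  smul_mem' c a ha g := by simpa [mul_assoc] using ha (g * c)

theorem mem_annIdeal {φ : Module.Dual R A} {a : A} : a ∈ φ.annIdeal ↔ ∀ g, φ (g * a) = 0 :=
  Iff.rfl

theorem apply_eq_zero_of_mem_annIdeal {φ : Module.Dual R A} {a : A} (ha : a ∈ φ.annIdeal) :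
    φ a = 0 := by
  simpa using ha 1

end Module.Dual

theorem Ideal.mem_colon_map_mk_iff {A : Type*} [CommRing A] {J M : Ideal A} {a : A} :
    Ideal.Quotient.mk J a ∈ (⊥ : Ideal (A ⧸ J)).colon (M.map (Ideal.Quotient.mk J)) ↔
      ∀ m ∈ M, m * a ∈ J := by
  simp only [Submodule.mem_colon, SetLike.mem_coe, smul_eq_mul, Submodule.mem_bot,
    Ideal.mem_map_iff_of_surjective _ Ideal.Quotient.mk_surjective, forall_exists_index, and_imp]
  constructor
  · intro h m hm
    rw [← Ideal.Quotient.eq_zero_iff_mem, map_mul, mul_comm]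
    exact h _ m hm rfl
  · rintro h _ m hm rfl
    rw [← map_mul, Ideal.Quotient.eq_zero_iff_mem, mul_comm]
    exact h m hm

section Socle

open Module.Dual

variable {k A ι : Type*} [Field k] [CommRing A] [Algebra k A] [Fintype ι] [DecidableEq ι]
variable {J M : Ideal A} (φ : ι → Module.Dual k A) (s : ι → A)

theorem sub_sum_smul_mem_of_dual
    (hJ : J = ⨅ i, (φ i).annIdeal) (hM : ∀ g, ∃ c : k, g - algebraMap k A c ∈ M)
    (hs : ∀ i, ∀ m ∈ M, m * s i ∈ J) (hφs : ∀ i j, φ i (s j) = if i = j then 1 else 0)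
    {a : A} (ha : ∀ m ∈ M, m * a ∈ J) : a - ∑ j, φ j a • s j ∈ J := by
  set a' := a - ∑ j, φ j a • s j
  have hM_mul : ∀ m ∈ M, m * a' ∈ J := fun m hm => by
    simp only [a', mul_sub, Finset.mul_sum, mul_smul_comm]
    exact J.sub_mem (ha m hm)
      (J.sum_mem fun j _ => Submodule.smul_of_tower_mem _ _ (hs j m hm))
  have hφ : ∀ i, φ i a' = 0 := fun i => by
    simp [a', hφs]
  rw [hJ, Submodule.mem_iInf]
  intro i g
  obtain ⟨c, hc⟩ := hM g
  have hJφ : J ≤ (φ i).annIdeal := hJ ▸ iInf_le _ i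
  calc φ i (g * a') = φ i (c • a') + φ i ((g - algebraMap k A c) * a') := by
        rw [← map_add, Algebra.smul_def, ← add_mul, add_sub_cancel]
    _ = 0 := by
        rw [map_smul, hφ, smul_zero, zero_add]
        exact apply_eq_zero_of_mem_annIdeal (hJφ (hM_mul _ hc))

theorem restrictScalars_colon_eq_span_of_dual
    (hJ : J = ⨅ i, (φ i).annIdeal) (hM : ∀ g, ∃ c : k, g - algebraMap k A c ∈ M)
    (hs : ∀ i, ∀ m ∈ M, m * s i ∈ J) (hφs : ∀ i j, φ i (s j) = if i = j then 1 else 0) :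
    ((⊥ : Ideal (A ⧸ J)).colon (M.map (Ideal.Quotient.mk J))).restrictScalars k =
      Submodule.span k (Set.range (Ideal.Quotient.mk J ∘ s)) := by
  apply le_antisymm
  · intro r hr
    obtain ⟨a, rfl⟩ := Ideal.Quotient.mk_surjective r
    have ha := sub_sum_smul_mem_of_dual φ s hJ hM hs hφs
      (Ideal.mem_colon_map_mk_iff.mp hr)
    rw [← Ideal.Quotient.eq, map_sum] at ha
    rw [ha]
    exact Submodule.sum_mem _ fun j _ => by
      rw [← Ideal.Quotient.mkₐ_eq_mk k, map_smul]
      exact Submodule.smul_mem _ _ (Submodule.subset_span ⟨j, rfl⟩)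
  · rw [Submodule.span_le]
    rintro _ ⟨j, rfl⟩
    exact Ideal.mem_colon_map_mk_iff.mpr (hs j)

theorem linearIndependent_mk_of_dual (hJ : J = ⨅ i, (φ i).annIdeal)
    (hφs : ∀ i j, φ i (s j) = if i = j then 1 else 0) :
    LinearIndependent k (Ideal.Quotient.mk J ∘ s) := by
  rw [Fintype.linearIndependent_iff]
  intro c hc i
  have hJφ : J ≤ (φ i).annIdeal := hJ ▸ iInf_le _ i
  have hmem : ∑ j, c j • s j ∈ (φ i).annIdeal := hJφ <| by
    rw [← Ideal.Quotient.eq_zero_iff_mem, ← Ideal.Quotient.mkₐ_eq_mk k, map_sum]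
    simpa using hc
  simpa [hφs] using apply_eq_zero_of_mem_annIdeal hmem

theorem colon_eq_span_of_dual
    (hJ : J = ⨅ i, (φ i).annIdeal) (hM : ∀ g, ∃ c : k, g - algebraMap k A c ∈ M)
    (hs : ∀ i, ∀ m ∈ M, m * s i ∈ J) (hφs : ∀ i j, φ i (s j) = if i = j then 1 else 0) :
    (⊥ : Ideal (A ⧸ J)).colon (M.map (Ideal.Quotient.mk J)) =
      Ideal.span (Set.range (Ideal.Quotient.mk J ∘ s)) := by
  have h := restrictScalars_colon_eq_span_of_dual φ s hJ hM hs hφs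
  apply le_antisymm
  · intro r hr
    have : r ∈ Submodule.span k (Set.range (Ideal.Quotient.mk J ∘ s)) := h ▸ hr
    exact Submodule.span_le_restrictScalars k _ _ this
  · rw [Ideal.span_le]
    intro r hr
    have : r ∈ Submodule.span k (Set.range (Ideal.Quotient.mk J ∘ s)) := Submodule.subset_span hr
    exact (h ▸ this : r ∈ _)

theorem finrank_colon_of_dual
    (hJ : J = ⨅ i, (φ i).annIdeal) (hM : ∀ g, ∃ c : k, g - algebraMap k A c ∈ M)
    (hs : ∀ i, ∀ m ∈ M, m * s i ∈ J) (hφs : ∀ i j, φ i (s j) = if i = j then 1 else 0) :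
    Module.finrank k (((⊥ : Ideal (A ⧸ J)).colon (M.map (Ideal.Quotient.mk J))).restrictScalars k) =
      Fintype.card ι := by
  rw [restrictScalars_colon_eq_span_of_dual φ s hJ hM hs hφs,
    finrank_span_eq_card (linearIndependent_mk_of_dual φ s hJ hφs)]

end Socle

namespace Ig4

open MvPowerSeries

variable {k : Type*} [Field k]

def exponent (a b c : ℕ) : Fin 3 →₀ ℕ :=
  Finsupp.single 0 a + Finsupp.single 1 b + Finsupp.single 2 c

@[simp] theorem exponent_apply_zero (a b c : ℕ) : exponent a b c 0 = a := by simp [exponent]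
@[simp] theorem exponent_apply_one (a b c : ℕ) : exponent a b c 1 = b := by simp [exponent]
@[simp] theorem exponent_apply_two (a b c : ℕ) : exponent a b c 2 = c := by simp [exponent]

theorem exponent_zero : exponent 0 0 0 = 0 := by simp [exponent]

theorem eq_exponent (d : Fin 3 →₀ ℕ) : d = exponent (d 0) (d 1) (d 2) := by
  ext i; fin_cases i <;> simp

@[simp] theorem exponent_inj {a b c a' b' c' : ℕ} :
    exponent a b c = exponent a' b' c' ↔ a = a' ∧ b = b' ∧ c = c' := by
  refine ⟨fun h => ?_, by rintro ⟨rfl, rfl, rfl⟩; rfl⟩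
  exact ⟨by simpa using DFunLike.congr_fun h 0, by simpa using DFunLike.congr_fun h 1,
    by simpa using DFunLike.congr_fun h 2⟩

@[simp] theorem exponent_le_exponent {a b c a' b' c' : ℕ} :
    exponent a b c ≤ exponent a' b' c' ↔ a ≤ a' ∧ b ≤ b' ∧ c ≤ c' := by
  simp [Finsupp.le_def, Fin.forall_fin_succ]

@[simp] theorem exponent_sub (a b c a' b' c' : ℕ) :
    exponent a b c - exponent a' b' c' = exponent (a - a') (b - b') (c - c') := by
  ext i; fin_cases i <;> simp

theorem monomial_exponent (a b c : ℕ) :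
    xx k ^ a * yy k ^ b * zz k ^ c = monomial (exponent a b c) 1 := by
  simp [xx, yy, zz, X_pow_eq, monomial_mul_monomial, exponent]

theorem eq_span_monomial : Ig4 k = Ideal.span {monomial (exponent 1 2 0) 1,
    monomial (exponent 1 1 1) 1, monomial (exponent 0 1 2) 1,
    monomial (exponent 4 0 0) 1 - monomial (exponent 0 3 1) 1,
    monomial (exponent 1 0 3) 1 - monomial (exponent 0 4 0) 1,
    monomial (exponent 3 1 0) 1 - monomial (exponent 0 0 4) 1,
    monomial (exponent 2 0 2) 1, monomial (exponent 3 0 1) 1} := by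
  simp [Ig4, ← monomial_exponent]

theorem generators_mem :
    xx k * yy k ^ 2 ∈ Ig4 k ∧ xx k * yy k * zz k ∈ Ig4 k ∧ yy k * zz k ^ 2 ∈ Ig4 k ∧
    xx k ^ 4 - yy k ^ 3 * zz k ∈ Ig4 k ∧ xx k * zz k ^ 3 - yy k ^ 4 ∈ Ig4 k ∧
    xx k ^ 3 * yy k - zz k ^ 4 ∈ Ig4 k ∧ xx k ^ 2 * zz k ^ 2 ∈ Ig4 k ∧ xx k ^ 3 * zz k ∈ Ig4 k := by
  refine ⟨?_, ?_, ?_, ?_, ?_, ?_, ?_, ?_⟩ <;> exact Ideal.subset_span (by simp)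

/-- Exponents of the minimal monomials lying in `g4`. -/
def cornerExponents : Finset (Fin 3 →₀ ℕ) :=
  {exponent 1 2 0, exponent 1 1 1, exponent 0 1 2, exponent 2 0 2, exponent 3 0 1,
    exponent 5 0 0, exponent 0 5 0, exponent 0 0 5}

theorem span_monomial_cornerExponents_le :
    Ideal.span ((fun e => monomial e (1 : k)) '' cornerExponents) ≤ Ig4 k := by
  obtain ⟨h₁, h₂, h₃, h₄, h₅, h₆, h₇, h₈⟩ := generators_mem (k := k)
  rw [Ideal.span_le]
  simp only [cornerExponents, Finset.coe_insert, Finset.coe_singleton, Set.image_insert_eq,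
    Set.image_singleton, Set.insert_subset_iff, Set.singleton_subset_iff, SetLike.mem_coe,
    ← monomial_exponent, pow_zero, pow_one, mul_one, one_mul]
  refine ⟨h₁, h₂, h₃, h₇, h₈, ?_, ?_, ?_⟩
  · rw [show xx k ^ 5 = xx k * (xx k ^ 4 - yy k ^ 3 * zz k) + yy k ^ 2 * (xx k * yy k * zz k) by
      ring]
    exact add_mem (Ideal.mul_mem_left _ _ h₄) (Ideal.mul_mem_left _ _ h₂)
  · rw [show yy k ^ 5 = -yy k * (xx k * zz k ^ 3 - yy k ^ 4) + zz k ^ 2 * (xx k * yy k * zz k) by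
      ring]
    exact add_mem (Ideal.mul_mem_left _ _ h₅) (Ideal.mul_mem_left _ _ h₂)
  · rw [show zz k ^ 5 = -zz k * (xx k ^ 3 * yy k - zz k ^ 4) + xx k ^ 2 * (xx k * yy k * zz k) by
      ring]
    exact add_mem (Ideal.mul_mem_left _ _ h₆) (Ideal.mul_mem_left _ _ h₂)

theorem monomial_mem_of_cornerExponents_le {d : Fin 3 →₀ ℕ}
    (h : ∃ e ∈ cornerExponents, e ≤ d) (r : k) : monomial d r ∈ Ig4 k := by
  have h1 : monomial d (1 : k) ∈ Ig4 k := span_monomial_cornerExponents_le <|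
    mem_span_monomial_of_coeff_ne_zero fun d' hd' => by
      classical
      rw [coeff_monomial] at hd'
      rwa [(ite_ne_right_iff.mp hd').1]
  have := Ideal.mul_mem_left _ (monomial 0 r) h1
  rwa [monomial_mul_monomial, zero_add, mul_one] at this

/-- The Macaulay inverse system of `g4` is generated by `X⁴Y + Y⁴Z + XZ⁴` and `X²Z`. -/
def inverseSystem (k : Type*) [Field k] : Fin 2 → Module.Dual k (MvPowerSeries (Fin 3) k) :=
  ![coeff (exponent 4 1 0) + coeff (exponent 0 4 1) + coeff (exponent 1 0 4),
    coeff (exponent 2 0 1)]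

theorem le_annIdeal_inverseSystem (i : Fin 2) : Ig4 k ≤ (inverseSystem k i).annIdeal := by
  rw [eq_span_monomial, Ideal.span_le]
  simp only [Set.insert_subset_iff, Set.singleton_subset_iff, SetLike.mem_coe,
    Module.Dual.mem_annIdeal]
  fin_cases i <;> simp [inverseSystem, mul_sub, coeff_mul_monomial]

def staircase : Finset (ℕ × ℕ × ℕ) :=
  {(0, 0, 0), (0, 0, 1), (0, 0, 2), (0, 0, 3), (0, 0, 4), (0, 1, 0), (0, 1, 1), (0, 2, 0),
    (0, 2, 1), (0, 3, 0), (0, 3, 1), (0, 4, 0), (0, 4, 1), (1, 0, 0), (1, 0, 1), (1, 0, 2),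
    (1, 0, 3), (1, 0, 4), (1, 1, 0), (2, 0, 0), (2, 0, 1), (2, 1, 0), (3, 0, 0), (3, 1, 0),
    (4, 0, 0), (4, 1, 0)}

set_option synthInstance.maxSize 1000 in
theorem mem_staircase_or : ∀ a < 5, ∀ b < 5, ∀ c < 5, (a, b, c) ∈ staircase ∨ (1 ≤ a ∧ 2 ≤ b) ∨
    (1 ≤ a ∧ 1 ≤ b ∧ 1 ≤ c) ∨ (1 ≤ b ∧ 2 ≤ c) ∨ (2 ≤ a ∧ 2 ≤ c) ∨ (3 ≤ a ∧ 1 ≤ c) := by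
  decide

theorem exists_mem_staircase {d : Fin 3 →₀ ℕ} (hd : ∀ e ∈ cornerExponents, ¬e ≤ d) :
    ∃ p ∈ staircase, d = exponent p.1 p.2.1 p.2.2 := by
  rw [eq_exponent d] at hd ⊢
  simp only [cornerExponents, Finset.mem_insert, Finset.mem_singleton, forall_eq_or_imp,
    forall_eq, exponent_le_exponent] at hd
  refine ⟨(d 0, d 1, d 2), ?_, rfl⟩
  refine (mem_staircase_or (d 0) (by omega) (d 1) (by omega) (d 2) (by omega)).resolve_right ?_
  omega

theorem monomial_sub_monomial_mem {a b : Fin 3 →₀ ℕ} (h : monomial a (1 : k) - monomial b 1 ∈ Ig4 k)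
    (r : k) : monomial a r - monomial b r ∈ Ig4 k := by
  have := Ideal.mul_mem_left _ (monomial 0 r) h
  rwa [mul_sub, monomial_mul_monomial, monomial_mul_monomial, zero_add, zero_add, mul_one] at this

theorem binomials_mem :
    monomial (exponent 0 3 1) (1 : k) - monomial (exponent 4 0 0) 1 ∈ Ig4 k ∧
    monomial (exponent 1 0 3) (1 : k) - monomial (exponent 0 4 0) 1 ∈ Ig4 k ∧
    monomial (exponent 3 1 0) (1 : k) - monomial (exponent 0 0 4) 1 ∈ Ig4 k ∧
    monomial (exponent 0 4 1) (1 : k) - monomial (exponent 4 1 0) 1 ∈ Ig4 k ∧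
    monomial (exponent 1 0 4) (1 : k) - monomial (exponent 4 1 0) 1 ∈ Ig4 k := by
  obtain ⟨-, -, -, h₄, h₅, h₆, -, -⟩ := generators_mem (k := k)
  simp only [← monomial_exponent, pow_zero, pow_one, mul_one, one_mul]
  refine ⟨?_, h₅, h₆, ?_, ?_⟩
  · simpa using neg_mem h₄
  · rw [show yy k ^ 4 * zz k - xx k ^ 4 * yy k = -zz k * (xx k * zz k ^ 3 - yy k ^ 4)
      - xx k * (xx k ^ 3 * yy k - zz k ^ 4) by ring]
    exact sub_mem (Ideal.mul_mem_left _ _ h₅) (Ideal.mul_mem_left _ _ h₆)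
  · rw [show xx k * zz k ^ 4 - xx k ^ 4 * yy k = -xx k * (xx k ^ 3 * yy k - zz k ^ 4) by ring]
    exact Ideal.mul_mem_left _ _ h₆

theorem iInf_annIdeal_inverseSystem_le : ⨅ i, (inverseSystem k i).annIdeal ≤ Ig4 k := by
  intro f hf
  have hψ : ∀ i e, inverseSystem k i (monomial e 1 * f) = 0 := fun i e =>
    (Submodule.mem_iInf _).mp hf i _
  -- move the coefficients of `y³z, xz³, x³y, y⁴z, xz⁴` onto `x⁴, y⁴, z⁴, x⁴y, x⁴y`
  set f₂ := f - ((monomial (exponent 0 3 1) (coeff (exponent 0 3 1) f)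
      - monomial (exponent 4 0 0) (coeff (exponent 0 3 1) f))
    + (monomial (exponent 1 0 3) (coeff (exponent 1 0 3) f)
      - monomial (exponent 0 4 0) (coeff (exponent 1 0 3) f))
    + (monomial (exponent 3 1 0) (coeff (exponent 3 1 0) f)
      - monomial (exponent 0 0 4) (coeff (exponent 3 1 0) f))
    + (monomial (exponent 0 4 1) (coeff (exponent 0 4 1) f)
      - monomial (exponent 4 1 0) (coeff (exponent 0 4 1) f))
    + (monomial (exponent 1 0 4) (coeff (exponent 1 0 4) f)
      - monomial (exponent 4 1 0) (coeff (exponent 1 0 4) f))) with hf₂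
  have hf₂mem : f₂ ∈ Ig4 k := by
    refine span_monomial_cornerExponents_le (mem_span_monomial_of_coeff_ne_zero fun d hd => ?_)
    by_contra! hcorner
    obtain ⟨p, hp, rfl⟩ := exists_mem_staircase hcorner
    refine hd ?_
    -- the coefficient of `f₂` at `d` is `ℓ_G` or `ℓ_F` of `X ^ e * f`, where `X ^ e` raises `d`
    -- to `x²z`, resp. to one of `x⁴y, y⁴z, xz⁴`
    have h1 := hψ 1 (exponent 2 0 1 - exponent p.1 p.2.1 p.2.2)
    have h2 := hψ 0 (exponent 4 1 0 - exponent p.1 p.2.1 p.2.2)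
    have h3 := hψ 0 (exponent 0 4 1 - exponent p.1 p.2.1 p.2.2)
    have h4 := hψ 0 (exponent 1 0 4 - exponent p.1 p.2.1 p.2.2)
    fin_cases hp <;>
      simp [inverseSystem, coeff_monomial_mul, hf₂, coeff_monomial, ← exponent_zero]
        at h1 h2 h3 h4 ⊢
      <;> first
        | linear_combination h1 | linear_combination h2 | linear_combination h3
        | linear_combination h4
  obtain ⟨b₁, b₂, b₃, b₄, b₅⟩ := binomials_mem (k := k)
  have hdiff : f - f₂ ∈ Ig4 k := by
    rw [hf₂, sub_sub_cancel]
    exact add_mem (add_mem (add_mem (add_mem (monomial_sub_monomial_mem b₁ _)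
      (monomial_sub_monomial_mem b₂ _)) (monomial_sub_monomial_mem b₃ _))
      (monomial_sub_monomial_mem b₄ _)) (monomial_sub_monomial_mem b₅ _)
  simpa using add_mem hdiff hf₂mem

theorem eq_iInf_annIdeal_inverseSystem : Ig4 k = ⨅ i, (inverseSystem k i).annIdeal :=
  le_antisymm (le_iInf le_annIdeal_inverseSystem) iInf_annIdeal_inverseSystem_le

theorem exists_sub_algebraMap_mem (g : MvPowerSeries (Fin 3) k) :
    ∃ c : k, g - algebraMap k _ c ∈ Ideal.span {xx k, yy k, zz k} := by
  have hX : Set.range (X (σ := Fin 3) (R := k)) = {xx k, yy k, zz k} := by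
    ext; simp [xx, yy, zz, Fin.exists_fin_succ, eq_comm]
  refine ⟨constantCoeff g, ?_⟩
  rw [← hX, ← c_eq_algebraMap]
  exact sub_C_constantCoeff_mem_span_X g

def socleGens (k : Type*) [Field k] : Fin 2 → MvPowerSeries (Fin 3) k :=
  ![xx k ^ 4 * yy k, xx k ^ 2 * zz k]

theorem mul_socleGens_mem (i : Fin 2) :
    ∀ m ∈ Ideal.span {xx k, yy k, zz k}, m * socleGens k i ∈ Ig4 k := by
  have hmem : ∀ {g : MvPowerSeries (Fin 3) k} (a b c : ℕ),
      (∃ e ∈ cornerExponents, e ≤ exponent a b c) → g = xx k ^ a * yy k ^ b * zz k ^ c →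
        g ∈ Ig4 k := by
    rintro g a b c h rfl
    rw [monomial_exponent]
    exact monomial_mem_of_cornerExponents_le h 1
  intro m hm
  suffices h : Ideal.span {xx k, yy k, zz k} ≤ (Ig4 k).colon {socleGens k i} from
    Submodule.mem_colon_singleton.mp (h hm)
  rw [Ideal.span_le]
  fin_cases i <;>
    simp only [socleGens, Set.insert_subset_iff, Set.singleton_subset_iff, SetLike.mem_coe,
      Submodule.mem_colon_singleton, smul_eq_mul] <;>
    refine ⟨?_, ?_, ?_⟩
  · exact hmem 5 1 0 (by simp [cornerExponents]) (by simp; ring)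
  · exact hmem 4 2 0 (by simp [cornerExponents]) (by simp; ring)
  · exact hmem 4 1 1 (by simp [cornerExponents]) (by simp; ring)
  · exact hmem 3 0 1 (by simp [cornerExponents]) (by simp; ring)
  · exact hmem 2 1 1 (by simp [cornerExponents]) (by simp; ring)
  · exact hmem 2 0 2 (by simp [cornerExponents]) (by simp; ring)

theorem inverseSystem_socleGens (i j : Fin 2) :
    inverseSystem k i (socleGens k j) = if i = j then 1 else 0 := by
  have h₁ : xx k ^ 4 * yy k = monomial (exponent 4 1 0) 1 := by rw [← monomial_exponent]; ring
  have h₂ : xx k ^ 2 * zz k = monomial (exponent 2 0 1) 1 := by rw [← monomial_exponent]; ring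
  fin_cases i <;> fin_cases j <;> simp [inverseSystem, socleGens, h₁, h₂, coeff_monomial]

end Ig4

/-- The socle `(0 :_R m)` of `R = Q/g4`. -/
theorem socle_g4 (k : Type*) [Field k] :
    (⊥ : Ideal (MvPowerSeries (Fin 3) k ⧸ Ig4 k)).colon
        (Ideal.map (Ideal.Quotient.mk (Ig4 k)) (Ideal.span {xx k, yy k, zz k}))
      = Ideal.span {Ideal.Quotient.mk (Ig4 k) (xx k ^ 4 * yy k), Ideal.Quotient.mk (Ig4 k) (xx k ^ 2 * zz k)} ∧
    Module.finrank k (Submodule.restrictScalars k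
      ((⊥ : Ideal (MvPowerSeries (Fin 3) k ⧸ Ig4 k)).colon
        (Ideal.map (Ideal.Quotient.mk (Ig4 k)) (Ideal.span {xx k, yy k, zz k})))) = 2 := by
  have hJ := Ig4.eq_iInf_annIdeal_inverseSystem (k := k)
  have hM := Ig4.exists_sub_algebraMap_mem (k := k)
  have hs := Ig4.mul_socleGens_mem (k := k)
  have hφs := Ig4.inverseSystem_socleGens (k := k)
  have hrange : Set.range (Ideal.Quotient.mk (Ig4 k) ∘ Ig4.socleGens k) = {Ideal.Quotient.mk
      (Ig4 k) (xx k ^ 4 * yy k), Ideal.Quotient.mk (Ig4 k) (xx k ^ 2 * zz k)} := by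
    rw [Set.range_comp, Ig4.socleGens, Matrix.range_cons_cons_empty, Set.image_pair]
  exact ⟨hrange ▸ colon_eq_span_of_dual _ _ hJ hM hs hφs,
    (finrank_colon_of_dual _ _ hJ hM hs hφs).trans (Fintype.card_fin 2)⟩
end
end

section
/- The ideal 𝔟₃ = (x³, x²y, yz², z³, xyz, xy² − y³) of Q is minimally generated by 6 elements; equivalently, the k-vector space 𝔟₃/(𝔪_Q·𝔟₃) has dimension 6. -/
noncomputable section

/-- The ideal `b3` of the paper. -/
def Ib3 (k : Type*) [Field k] : Ideal (MvPowerSeries (Fin 3) k) :=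
  Ideal.span {xx k ^ 3, xx k ^ 2 * yy k, yy k * zz k ^ 2, zz k ^ 3, xx k * yy k * zz k, xx k * yy k ^ 2 - yy k ^ 3}

/-!
Every element of `𝔟₃` is congruent modulo `𝔪_Q 𝔟₃` to a `k`-linear combination of the six
generators, because each `a ∈ Q` is congruent to its constant term modulo `𝔪_Q = (x, y, z)`.
Conversely, the generators are homogeneous cubics and `𝔪_Q 𝔟₃` consists of series of order at
least `4`, so the coefficients of `x³, x²y, yz², z³, xyz, xy²` vanish on `𝔪_Q 𝔟₃`; on the
generators these six coefficient functionals form the identity matrix, which gives linear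
independence.
-/

namespace MvPowerSeries

variable {σ R : Type*} [CommSemiring R]

theorem le_order_of_mem_span {s : Set (MvPowerSeries σ R)} {n : ℕ∞}
    (hs : ∀ f ∈ s, n ≤ f.order) {f : MvPowerSeries σ R} (hf : f ∈ Ideal.span s) :
    n ≤ f.order := by
  induction hf using Submodule.span_induction with
  | mem f hf => exact hs f hf
  | zero => simp
  | add f g _ _ hf hg => exact (le_min hf hg).trans min_order_le_add
  | smul a f _ hf => exact hf.trans (le_add_self.trans le_order_mul)

theorem le_order_of_mem_mul {I J : Ideal (MvPowerSeries σ R)} {m n : ℕ∞}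
    (hI : ∀ f ∈ I, m ≤ f.order) (hJ : ∀ g ∈ J, n ≤ g.order) {f : MvPowerSeries σ R}
    (hf : f ∈ I * J) : m + n ≤ f.order := by
  refine Submodule.mul_induction_on hf (fun f hf g hg => ?_) fun f g hf hg => ?_
  · exact (add_le_add (hI f hf) (hJ g hg)).trans le_order_mul
  · exact (le_min hf hg).trans min_order_le_add

theorem mem_span_X_image_of_coeff_eq_zero (s : Finset σ) {f : MvPowerSeries σ R}
    (hf : ∀ m : σ →₀ ℕ, (∀ i ∈ s, m i = 0) → coeff m f = 0) :
    f ∈ Ideal.span (X '' s) := by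
  classical
  induction s using Finset.induction_on generalizing f with
  | empty =>
    obtain rfl : f = 0 := by ext m; simpa using hf m
    exact zero_mem _
  | insert a s _ ih =>
    let g : MvPowerSeries σ R := fun m => if m a = 0 then coeff m f else 0
    let h : MvPowerSeries σ R := fun m => if m a = 0 then 0 else coeff m f
    have hfgh : f = g + h := by
      ext m
      change coeff m f = (if m a = 0 then coeff m f else 0) + (if m a = 0 then 0 else coeff m f)
      split_ifs <;> simp
    have hg : g ∈ Ideal.span (X '' s) := ih fun m hm => by
      change (if m a = 0 then coeff m f else 0) = 0
      split_ifs with hma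
      · exact hf m (by simpa [hma] using hm)
      · rfl
    obtain ⟨h', hh'⟩ : X a ∣ h := X_dvd_iff.mpr fun m hm => by
      change (if m a = 0 then 0 else coeff m f) = 0
      simp [hm]
    rw [hfgh, hh', Finset.coe_insert, Set.image_insert_eq]
    exact add_mem (Ideal.span_mono (Set.subset_insert _ _) hg)
      (Ideal.mul_mem_right _ _ (Ideal.subset_span (Set.mem_insert _ _)))

theorem mem_span_range_X_of_constantCoeff_eq_zero [Fintype σ] {f : MvPowerSeries σ R}
    (hf : constantCoeff f = 0) : f ∈ Ideal.span (Set.range X) := by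
  rw [← Set.image_univ, ← Finset.coe_univ]
  refine mem_span_X_image_of_coeff_eq_zero _ fun m hm => ?_
  obtain rfl : m = 0 := by ext i; exact hm i (Finset.mem_univ i)
  exact hf

end MvPowerSeries

theorem Ideal.map_mkQ_restrictScalars_span_range {k Q ι : Type*} [CommRing k] [CommRing Q]
    [Algebra k Q] (m : Ideal Q) (hm : ∀ a : Q, ∃ c : k, a - algebraMap k Q c ∈ m) (g : ι → Q) :
    Submodule.map ((m * Ideal.span (Set.range g)).restrictScalars k).mkQ
        ((Ideal.span (Set.range g)).restrictScalars k) =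
      Submodule.span k
        (Set.range fun i => ((m * Ideal.span (Set.range g)).restrictScalars k).mkQ (g i)) := by
  set π := ((m * Ideal.span (Set.range g)).restrictScalars k).mkQ
  refine le_antisymm ?_ (Submodule.span_le.mpr ?_)
  · rintro _ ⟨f, hf, rfl⟩
    induction hf using Submodule.span_induction with
    | mem f hf =>
      obtain ⟨i, rfl⟩ := hf
      exact Submodule.subset_span ⟨i, rfl⟩
    | zero => simpa only [map_zero] using zero_mem _
    | add f f' _ _ hf hf' => simpa only [map_add] using add_mem hf hf'
    | smul a f hf ih =>
      obtain ⟨c, hc⟩ := hm a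
      have hπ : π (a • f) = c • π f := by
        rw [← map_smul, Submodule.mkQ_apply, Submodule.mkQ_apply, Submodule.Quotient.eq,
          Submodule.restrictScalars_mem, smul_eq_mul, Algebra.smul_def, ← sub_mul]
        exact Ideal.mul_mem_mul hc hf
      rw [hπ]
      exact Submodule.smul_mem _ c ih
  · rintro _ ⟨i, rfl⟩
    exact ⟨g i, Ideal.subset_span ⟨i, rfl⟩, rfl⟩

open MvPowerSeries

def exp3 (a b c : ℕ) : Fin 3 →₀ ℕ := Finsupp.equivFunOnFinite.symm ![a, b, c]

theorem exp3_inj {a b c a' b' c' : ℕ} :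
    exp3 a b c = exp3 a' b' c' ↔ a = a' ∧ b = b' ∧ c = c' := by
  simp [exp3, Finsupp.equivFunOnFinite.symm.injective.eq_iff]

theorem degree_exp3 (a b c : ℕ) : (exp3 a b c).degree = a + b + c := by
  simp [exp3, Finsupp.degree_eq_sum, Fin.sum_univ_three, add_assoc]

section

variable (k : Type*) [Field k]

theorem xx_pow_mul_yy_pow_mul_zz_pow (a b c : ℕ) :
    xx k ^ a * yy k ^ b * zz k ^ c = monomial (exp3 a b c) 1 := by
  have hexp : Finsupp.single 0 a + Finsupp.single 1 b + Finsupp.single 2 c = exp3 a b c := by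
    ext i
    fin_cases i <;> simp [exp3]
  rw [xx, yy, zz, X_pow_eq, X_pow_eq, X_pow_eq, monomial_mul_monomial, monomial_mul_monomial,
    one_mul, one_mul, hexp]

theorem span_xx_yy_zz : Ideal.span {xx k, yy k, zz k} = Ideal.span (Set.range X) := by
  congr 1
  ext f
  simp [xx, yy, zz, Fin.exists_fin_succ, eq_comm]

namespace Ib3

def gen : Fin 6 → MvPowerSeries (Fin 3) k :=
  ![xx k ^ 3, xx k ^ 2 * yy k, yy k * zz k ^ 2, zz k ^ 3, xx k * yy k * zz k,
    xx k * yy k ^ 2 - yy k ^ 3]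

theorem eq_span_range_gen : Ib3 k = Ideal.span (Set.range (gen k)) := by
  rw [Ib3]
  congr 1
  simp only [gen, Matrix.range_cons, Matrix.range_empty, Set.union_empty, Set.singleton_union]

theorem gen_eq_monomial : gen k = ![monomial (exp3 3 0 0) 1, monomial (exp3 2 1 0) 1,
    monomial (exp3 0 1 2) 1, monomial (exp3 0 0 3) 1, monomial (exp3 1 1 1) 1,
    monomial (exp3 1 2 0) 1 - monomial (exp3 0 3 0) 1] := by
  simp [gen, ← xx_pow_mul_yy_pow_mul_zz_pow]

def leadExp : Fin 6 → Fin 3 →₀ ℕ :=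
  ![exp3 3 0 0, exp3 2 1 0, exp3 0 1 2, exp3 0 0 3, exp3 1 1 1, exp3 1 2 0]

theorem degree_leadExp (j : Fin 6) : (leadExp j).degree = 3 := by
  fin_cases j <;> simp [leadExp, degree_exp3]

theorem coeff_leadExp_gen (i j : Fin 6) :
    coeff (leadExp j) (gen k i) = (Pi.single i (1 : k) : Fin 6 → k) j := by
  rw [gen_eq_monomial]
  fin_cases i <;> fin_cases j <;> simp [leadExp, coeff_monomial, exp3_inj]

theorem three_le_order_gen (i : Fin 6) : 3 ≤ (gen k i).order := by
  rw [gen_eq_monomial]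
  refine le_order fun d hd => ?_
  have hne (a b c : ℕ) (habc : 3 ≤ a + b + c) : d ≠ exp3 a b c := by
    rintro rfl
    rw [degree_exp3] at hd
    norm_cast at hd
    omega
  fin_cases i <;> simp [coeff_monomial, hne]

theorem four_le_order_of_mem_span_mul {f : MvPowerSeries (Fin 3) k}
    (hf : f ∈ Ideal.span {xx k, yy k, zz k} * Ib3 k) : 4 ≤ f.order := by
  rw [eq_span_range_gen] at hf
  refine le_order_of_mem_mul (m := 1) (n := 3) ?_ ?_ hf
  · exact fun g hg =>
      le_order_of_mem_span (by simp [xx, yy, zz, one_le_order_iff_constCoeff_eq_zero]) hg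
  · exact fun g hg => le_order_of_mem_span (by simp [three_le_order_gen]) hg

theorem linearIndependent_mkQ_gen :
    LinearIndependent k fun i =>
      ((Ideal.span {xx k, yy k, zz k} * Ib3 k).restrictScalars k).mkQ (gen k i) := by
  classical
  let φ : MvPowerSeries (Fin 3) k →ₗ[k] Fin 6 → k := LinearMap.pi fun j => coeff (leadExp j)
  have hφ : (Ideal.span {xx k, yy k, zz k} * Ib3 k).restrictScalars k ≤ LinearMap.ker φ :=
    fun f hf => by
      ext j
      refine coeff_of_lt_order ((?_ : ((leadExp j).degree : ℕ∞) < 4).trans_le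
        (four_le_order_of_mem_span_mul k hf))
      rw [degree_leadExp]
      norm_num
  refine LinearIndependent.of_comp (Submodule.liftQ _ φ hφ) ?_
  have hcomp : Submodule.liftQ _ φ hφ ∘ (fun i => Submodule.mkQ _ (gen k i)) =
      fun i => Pi.single i 1 := by
    funext i j
    simp only [Function.comp_apply, Submodule.mkQ_apply, Submodule.liftQ_apply, φ,
      LinearMap.pi_apply, coeff_leadExp_gen]
  rw [hcomp]
  exact Pi.linearIndependent_single_one (Fin 6) k

end Ib3

end

theorem mu_b3 (k : Type*) [Field k] :
    Module.finrank k
      (Submodule.map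
        (Submodule.restrictScalars k (Ideal.span {xx k, yy k, zz k} * Ib3 k)).mkQ
        (Submodule.restrictScalars k (Ib3 k))) = 6 := by
  have hm (a : MvPowerSeries (Fin 3) k) :
      ∃ c : k, a - algebraMap k _ c ∈ Ideal.span {xx k, yy k, zz k} :=
    ⟨constantCoeff a, by
      rw [span_xx_yy_zz]
      exact mem_span_range_X_of_constantCoeff_eq_zero (by simp [← c_eq_algebraMap])⟩
  rw [Ib3.eq_span_range_gen, Ideal.map_mkQ_restrictScalars_span_range _ hm,
    ← Ib3.eq_span_range_gen, finrank_span_eq_card (Ib3.linearIndependent_mkQ_gen k),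
    Fintype.card_fin]
end
end
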